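/- Let h ∈ ℝ^t with all h_i > 0, and fix an index i ∈ {0,...,t-1} with h_i ≥ ∑_{j≠i} h_j + 2. Consider the 1-dimensional Huber function f(x) = x²/2 for |x| ≤ 1 and f(x) = |x| - 1/2 otherwise (which is convex and 1-smooth), and run gradient descent x_{m+1} = x_m - h_m f'(x_m) from x_0 = -∑_{j<i} h_j - 1. Then x_i = -1, x_{i+1} ≥ ∑_{j≠i} h_j + 1, and x_t ≥ ∑_{j<i} h_j + 1, so f(x_t) ≥ f(x_0); i.e., the pattern fails to descend. -/

import Mathlib

/-- The 1-dimensional Huber function: x²/2 on [-1,1] and |x| - 1/2 outside. -/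
noncomputable def huber (x : ℝ) : ℝ := if |x| ≤ 1 then x ^ 2 / 2 else |x| - 1 / 2

/-- Its derivative: x on [-1,1] and sign(x) outside. -/
noncomputable def huberDeriv (x : ℝ) : ℝ :=
  if |x| ≤ 1 then x else (if 0 < x then 1 else -1)

lemma huberDeriv_neg {x : ℝ} (hx : x ≤ -1) : huberDeriv x = -1 := by
  unfold huberDeriv
  split
  · next ha => linarith [(abs_le.mp ha).1]
  · rw [if_neg (by linarith)]

lemma huberDeriv_pos {x : ℝ} (hx : 1 ≤ x) : huberDeriv x = 1 := by
  unfold huberDeriv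
  split
  · next ha => linarith [(abs_le.mp ha).2]
  · rw [if_pos (by linarith)]

lemma huber_of_one_le {x : ℝ} (hx : 1 ≤ x) : huber x = x - 1/2 := by
  unfold huber
  rcases eq_or_lt_of_le hx with h1 | h1
  · subst h1; norm_num
  · rw [if_neg (by rw [abs_of_pos (by linarith)]; linarith),
      abs_of_pos (by linarith)]

lemma huber_of_le_neg_one {x : ℝ} (hx : x ≤ -1) : huber x = -x - 1/2 := by
  unfold huber
  rcases eq_or_lt_of_le hx with h1 | h1
  · subst h1; norm_num
  · rw [if_neg (by rw [abs_of_neg (by linarith)]; linarith),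
      abs_of_neg (by linarith)]

/-- if h_i ≥ ∑_{j≠i} h_j + 2, then gradient descent on the Huber
function from x₀ = -∑_{j<i} h_j - 1 has x_i = -1, x_{i+1} ≥ ∑_{j≠i} h_j + 1 and
x_t ≥ ∑_{j<i} h_j + 1, so f(x_t) ≥ f(x_0): the pattern fails to descend. -/
theorem stmt9 (t : ℕ) (h : ℕ → ℝ) (hpos : ∀ j < t, 0 < h j)
    (i : ℕ) (hit : i < t)
    (hbig : (∑ j ∈ (Finset.range t).erase i, h j) + 2 ≤ h i)
    (x : ℕ → ℝ)
    (hx0 : x 0 = -(∑ j ∈ Finset.range i, h j) - 1)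
    (hstep : ∀ m < t, x (m + 1) = x m - h m * huberDeriv (x m)) :
    x i = -1 ∧
    (∑ j ∈ (Finset.range t).erase i, h j) + 1 ≤ x (i + 1) ∧
    (∑ j ∈ Finset.range i, h j) + 1 ≤ x t ∧
    huber (x 0) ≤ huber (x t) := by
  set S := ∑ j ∈ (Finset.range t).erase i, h j with hS
  -- sums are nonnegative
  have hnn : ∀ (s : Finset ℕ), s ⊆ Finset.range t → 0 ≤ ∑ j ∈ s, h j := by
    intro s hs
    exact Finset.sum_nonneg fun j hj => (hpos j (Finset.mem_range.mp (hs hj))).le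
  -- S = ∑ range i + ∑ Ico (i+1) t
  have hsplit : S = (∑ j ∈ Finset.range i, h j) + ∑ j ∈ Finset.Ico (i+1) t, h j := by
    have h1 : h i + S = ∑ j ∈ Finset.range t, h j :=
      Finset.add_sum_erase _ h (Finset.mem_range.mpr hit)
    have h2 : ∑ j ∈ Finset.range t, h j
        = (∑ j ∈ Finset.range i, h j) + ∑ j ∈ Finset.Ico i t, h j :=
      (Finset.sum_range_add_sum_Ico h hit.le).symm
    have h3 : ∑ j ∈ Finset.Ico i t, h j = h i + ∑ j ∈ Finset.Ico (i+1) t, h j := by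
      rw [← Finset.sum_eq_sum_Ico_succ_bot hit]
    linarith
  -- Phase 1
  have phase1 : ∀ m, m ≤ i → x m = -(∑ j ∈ Finset.Ico m i, h j) - 1 := by
    intro m
    induction m with
    | zero => intro _; rw [hx0, Finset.range_eq_Ico]
    | succ m ih =>
      intro hm
      have hmi : m < i := hm
      have hxm := ih hmi.le
      have hle : x m ≤ -1 := by
        have := hnn (Finset.Ico m i) (by
          intro j hj
          exact Finset.mem_range.mpr (lt_of_lt_of_le (Finset.mem_Ico.mp hj).2 hit.le))
        linarith
      rw [hstep m (lt_of_lt_of_le hmi hit.le), huberDeriv_neg hle, hxm,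
        Finset.sum_eq_sum_Ico_succ_bot hmi]
      ring
  have hxi : x i = -1 := by simpa using phase1 i le_rfl
  -- x (i+1)
  have hxi1 : x (i+1) = h i - 1 := by
    rw [hstep i hit, hxi, huberDeriv_neg le_rfl]; ring
  have hxi1' : S + 1 ≤ x (i+1) := by rw [hxi1]; linarith
  -- Phase 2
  have phase2 : ∀ k, i + 1 + k ≤ t →
      x (i + 1 + k) = x (i+1) - ∑ j ∈ Finset.Ico (i+1) (i+1+k), h j := by
    intro k
    induction k with
    | zero =>
      intro _
      simp only [Nat.add_zero, Finset.Ico_self, Finset.sum_empty, sub_zero]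
    | succ k ih =>
      intro hk
      have hk' : i + 1 + k ≤ t := by omega
      have hxk := ih hk'
      have hsub : Finset.Ico (i+1) (i+1+k) ⊆ (Finset.range t).erase i := by
        intro j hj
        have := Finset.mem_Ico.mp hj
        exact Finset.mem_erase.mpr ⟨by omega, Finset.mem_range.mpr (by omega)⟩
      have hsum_le : ∑ j ∈ Finset.Ico (i+1) (i+1+k), h j ≤ S :=
        Finset.sum_le_sum_of_subset_of_nonneg hsub
          (fun j hj _ => (hpos j (Finset.mem_range.mp (Finset.mem_erase.mp hj).2)).le)
      have hge : 1 ≤ x (i+1+k) := by rw [hxk]; linarith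
      have : x (i+1+(k+1)) = x (i+1+k) - h (i+1+k) := by
        have := hstep (i+1+k) (by omega)
        rw [huberDeriv_pos hge] at this
        rw [show i+1+(k+1) = i+1+k+1 by ring, this]; ring
      rw [this, hxk, show i+1+(k+1) = (i+1+k)+1 from rfl,
        Finset.sum_Ico_succ_top (by omega)]
      ring
  -- x t
  have hxt : x t = x (i+1) - ∑ j ∈ Finset.Ico (i+1) t, h j := by
    have := phase2 (t - (i+1)) (by omega)
    rwa [show i + 1 + (t - (i+1)) = t by omega] at this
  have hxtge : (∑ j ∈ Finset.range i, h j) + 1 ≤ x t := by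
    rw [hxt]
    have := hxi1'
    rw [hsplit] at this
    linarith
  refine ⟨hxi, hxi1', hxtge, ?_⟩
  have hri : 0 ≤ ∑ j ∈ Finset.range i, h j := hnn _ (by
    intro j hj; exact Finset.mem_range.mpr (lt_of_lt_of_le (Finset.mem_range.mp hj) hit.le))
  rw [huber_of_le_neg_one (by rw [hx0]; linarith),
    huber_of_one_le (by linarith), hx0]
  linarith
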